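/- arXiv:2109.02127 — 3 statements merged into one kernel-verified Lean document; each statement's English description precedes it below -/
import Mathlib

section
/- Let X be a Banach space, M_d a BK-space in which the standard unit vectors {e_n} form a Schauder basis, {f_n} a sequence of Lipschitz scalar functions on X, and S : M_d → X a bounded linear operator. Then ({f_n}, S) is a metric frame for X if and only if ({f_n}, {S e_n}) is a Lipschitz atomic decomposition for X with respect to M_d. -/
open Filter

theorem stmt17 {X Md : Type*} [NormedAddCommGroup X] [NormedSpace ℝ X] [CompleteSpace X]
    [NormedAddCommGroup Md] [NormedSpace ℝ Md] [CompleteSpace Md]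
    -- `Md` is a BK-space whose standard unit vectors `e n` form a Schauder basis,
    -- with continuous coordinate functionals `coord n`.
    (e : ℕ → Md) (coord : ℕ → Md →L[ℝ] ℝ)
    (hunit : ∀ n m, coord n (e m) = if n = m then 1 else 0)
    (hbasis : ∀ c : Md,
      Tendsto (fun N => ∑ n ∈ Finset.range N, coord n c • e n) atTop (nhds c))
    -- `{f n}` are Lipschitz scalar functions on `X` with analysis map `θ` into `Md`
    -- satisfying the two-sided frame bounds `a ≤ b`.
    (f : ℕ → X → ℝ) (hflip : ∀ n, ∃ K : NNReal, LipschitzWith K (f n))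
    (θ : X → Md) (hmem : ∀ x n, coord n (θ x) = f n x)
    (a b : ℝ) (ha : 0 < a) (hab : a ≤ b)
    (hlow : ∀ x y : X, a * ‖x - y‖ ≤ ‖θ x - θ y‖)
    (hup : ∀ x y : X, ‖θ x - θ y‖ ≤ b * ‖x - y‖)
    -- `S` is a bounded linear operator from `Md` to `X`
    (S : Md →L[ℝ] X) :
    -- `({f n}, S)` is a metric frame iff `({f n}, {S (e n)})` is a Lipschitz atomic
    -- decomposition
    (∀ x : X, S (θ x) = x) ↔
      (∀ x : X,
        Tendsto (fun N => ∑ n ∈ Finset.range N, f n x • S (e n)) atTop (nhds x)) := by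
  have key : ∀ x : X,
      Tendsto (fun N => ∑ n ∈ Finset.range N, f n x • S (e n)) atTop (nhds (S (θ x))) := by
    intro x
    have h := (S.continuous.tendsto (θ x)).comp (hbasis (θ x))
    simpa [Function.comp_def, map_sum, hmem] using h
  constructor
  · intro h x
    simpa [h x] using key x
  · intro h x
    exact tendsto_nhds_unique (key x) (h x)
end

section
/- Let ({f_n}, {τ_n}) be a Lipschitz atomic decomposition for a Banach space X with respect to a BK-space M_d, with bounds 0 < a ≤ b. Let {ω_n} ⊂ X and λ₁, λ₂, μ ≥ 0 with max{λ₂, λ₁+μb} < 1, assume Σ f_n(x) ω_n converges for each x ∈ X, and assume ‖Σ_n (c_n−d_n)(τ_n−ω_n)‖ ≤ λ₁‖Σ_n (c_n−d_n)τ_n‖ + λ₂‖Σ_n (c_n−d_n)ω_n‖ + μ‖{c_n−d_n}_n‖ for all {c_n}, {d_n} ∈ M_d for which these series converge. Then there exists a family {g_n} of Lipschitz scalar functions on X such that ({g_n}, {ω_n}) is a Lipschitz atomic decomposition for X with lower bound a(1−λ₂)/(1+λ₁+μb) and upper bound b(1+λ₂)/(1−(λ₁+μb)). -/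
open Filter

private lemma aux_lowS {X : Type*} [NormedAddCommGroup X] [NormedSpace ℝ X]
    (T : X → X) (r l2 : ℝ) (hr0 : 0 ≤ r) (hr1 : r < 1) (hl20 : 0 ≤ l2) (hl21 : l2 < 1)
    (key : ∀ x y : X, ‖(x - y) - (T x - T y)‖ ≤ r * ‖x - y‖ + l2 * ‖T x - T y‖)
    (t : ℝ) (ht0 : 0 ≤ t) (ht1 : t ≤ 1) (x y : X) :
    (1 - max r l2) / (1 + l2) * ‖x - y‖ ≤ ‖(x + t • (T x - x)) - (y + t • (T y - y))‖ := by
  set w : X := (x + t • (T x - x)) - (y + t • (T y - y)) with hw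
  set u := ‖x - y‖ with hu
  set v := ‖w‖ with hv
  set D := ‖(x - y) - (T x - T y)‖ with hD
  have hu0 : 0 ≤ u := norm_nonneg _
  have hv0 : 0 ≤ v := norm_nonneg _
  have hD0 : 0 ≤ D := norm_nonneg _
  have i1 : u ≤ v + t * D := by
    have e3 : x - y = w + t • ((x - y) - (T x - T y)) := by rw [hw]; module
    calc u = ‖w + t • ((x - y) - (T x - T y))‖ := by rw [hu, ← e3]
      _ ≤ v + ‖t • ((x - y) - (T x - T y))‖ := norm_add_le _ _
      _ = v + t * D := by rw [norm_smul, Real.norm_eq_abs, abs_of_nonneg ht0]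
  have i2 : ‖T x - T y‖ ≤ v + (1 - t) * D := by
    have e2 : T x - T y = w - (1 - t) • ((x - y) - (T x - T y)) := by rw [hw]; module
    calc ‖T x - T y‖ = ‖w - (1 - t) • ((x - y) - (T x - T y))‖ := by rw [← e2]
      _ ≤ v + ‖(1 - t) • ((x - y) - (T x - T y))‖ := norm_sub_le _ _
      _ = v + (1 - t) * D := by rw [norm_smul, Real.norm_eq_abs, abs_of_nonneg (by linarith)]
  have i3 : D ≤ r * u + l2 * ‖T x - T y‖ := key x y
  have i4 : (1 - (1 - t) * l2) * D ≤ r * u + l2 * v := by nlinarith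
  have hden : 0 < 1 - (1 - t) * l2 := by nlinarith
  have i5 : (1 - (1 - t) * l2 - t * r) * u ≤ (1 - (1 - t) * l2 + t * l2) * v := by nlinarith
  have hmx : (1 - t) * l2 + t * r ≤ max r l2 := by
    rcases le_total r l2 with h | h
    · have h2 : (1 - t) * l2 + t * r ≤ (1 - t) * l2 + t * l2 := by nlinarith
      rw [max_eq_right h]; nlinarith
    · have h2 : (1 - t) * l2 + t * r ≤ (1 - t) * r + t * r := by nlinarith
      rw [max_eq_left h]; nlinarith
  have hmx1 : max r l2 < 1 := max_lt hr1 hl21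
  rw [div_mul_eq_mul_div, div_le_iff₀ (by linarith : (0:ℝ) < 1 + l2)]
  nlinarith [mul_le_mul_of_nonneg_right hmx hu0,
    mul_nonneg (mul_nonneg hl20 (by linarith : (0:ℝ) ≤ 1 - t)) hv0]

private lemma aux_surj {X : Type*} [NormedAddCommGroup X] [NormedSpace ℝ X] [CompleteSpace X]
    (T : X → X) (r l2 : ℝ) (hr0 : 0 ≤ r) (hr1 : r < 1) (hl20 : 0 ≤ l2) (hl21 : l2 < 1)
    (key : ∀ x y : X, ‖(x - y) - (T x - T y)‖ ≤ r * ‖x - y‖ + l2 * ‖T x - T y‖) :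
    Function.Surjective T := by
  classical
  set c : ℝ := (1 - max r l2) / (1 + l2) with hc
  have hmx1 : max r l2 < 1 := max_lt hr1 hl21
  have hc0 : 0 < c := div_pos (by linarith) (by linarith)
  set K : ℝ := (r + l2) / (1 - l2) with hK
  have hl2' : (0:ℝ) < 1 - l2 := by linarith
  have hK0 : 0 ≤ K := div_nonneg (by linarith) (by linarith)
  have keyD : ∀ x y : X, ‖(T x - x) - (T y - y)‖ ≤ K * ‖x - y‖ := by
    intro x y
    have h1 : (T x - x) - (T y - y) = -((x - y) - (T x - T y)) := by abel
    rw [h1, norm_neg]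
    have h2 := key x y
    have h3 : ‖T x - T y‖ ≤ ‖x - y‖ + ‖(x - y) - (T x - T y)‖ := by
      have e : (x - y) - ((x - y) - (T x - T y)) = T x - T y := by abel
      calc ‖T x - T y‖ = ‖(x - y) - ((x - y) - (T x - T y))‖ := by rw [e]
        _ ≤ ‖x - y‖ + ‖(x - y) - (T x - T y)‖ := norm_sub_le _ _
    rw [hK, div_mul_eq_mul_div, le_div_iff₀ hl2']
    nlinarith [norm_nonneg (x - y)]
  have lowS : ∀ t : ℝ, 0 ≤ t → t ≤ 1 → ∀ x y : X,
      c * ‖x - y‖ ≤ ‖(x + t • (T x - x)) - (y + t • (T y - y))‖ :=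
    fun t ht0 ht1 x y => aux_lowS T r l2 hr0 hr1 hl20 hl21 key t ht0 ht1 x y
  -- one continuation step
  have step : ∀ s t : ℝ, 0 ≤ s → s ≤ 1 → 0 ≤ t → t ≤ 1 → |t - s| * K ≤ c / 2 →
      Function.Surjective (fun x => x + s • (T x - x)) →
      Function.Surjective (fun x => x + t • (T x - x)) := by
    intro s t hs0 hs1 ht0 ht1 hst hsurj y
    choose inv hinv using hsurj
    simp only at hinv
    have hinvlip : ∀ z w : X, c * ‖inv z - inv w‖ ≤ ‖z - w‖ := by
      intro z w
      have h := lowS s hs0 hs1 (inv z) (inv w)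
      rwa [hinv z, hinv w] at h
    set Φ : X → X := fun x => inv (y - (t - s) • (T x - x)) with hΦ
    have hcontr : ∀ x x' : X, dist (Φ x) (Φ x') ≤ (1/2 : ℝ) * dist x x' := by
      intro x x'
      rw [dist_eq_norm, dist_eq_norm]
      have h1 : c * ‖Φ x - Φ x'‖ ≤ ‖(y - (t - s) • (T x - x)) - (y - (t - s) • (T x' - x'))‖ :=
        hinvlip _ _
      have e : (y - (t - s) • (T x - x)) - (y - (t - s) • (T x' - x'))
          = (t - s) • ((T x' - x') - (T x - x)) := by module
      rw [e, norm_smul, Real.norm_eq_abs] at h1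
      have h2 := keyD x x'
      have h3 : |t - s| * ‖(T x - x) - (T x' - x')‖ ≤ |t - s| * (K * ‖x - x'‖) :=
        mul_le_mul_of_nonneg_left h2 (abs_nonneg _)
      have h4 : |t - s| * (K * ‖x - x'‖) ≤ (c / 2) * ‖x - x'‖ := by
        have h5 := mul_le_mul_of_nonneg_right hst (norm_nonneg (x - x'))
        calc |t - s| * (K * ‖x - x'‖) = |t - s| * K * ‖x - x'‖ := by ring
          _ ≤ (c / 2) * ‖x - x'‖ := h5
      have h6 : c * ‖Φ x - Φ x'‖ ≤ (c / 2) * ‖x - x'‖ := by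
        calc c * ‖Φ x - Φ x'‖ ≤ |t - s| * ‖(T x' - x') - (T x - x)‖ := h1
          _ = |t - s| * ‖(T x - x) - (T x' - x')‖ := by rw [norm_sub_rev]
          _ ≤ |t - s| * (K * ‖x - x'‖) := h3
          _ ≤ (c / 2) * ‖x - x'‖ := h4
      have h7 : c * ‖Φ x - Φ x'‖ ≤ c * ((1/2 : ℝ) * ‖x - x'‖) := by
        have h8 : c * ((1/2 : ℝ) * ‖x - x'‖) = (c / 2) * ‖x - x'‖ := by ring
        linarith
      exact le_of_mul_le_mul_left h7 hc0
    have hlip : LipschitzWith (1/2 : NNReal) Φ := by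
      apply LipschitzWith.of_dist_le_mul
      intro x x'
      have h := hcontr x x'
      have : ((1/2 : NNReal) : ℝ) = (1/2 : ℝ) := by norm_num
      rw [this]; exact h
    have hC : ContractingWith (1/2 : NNReal) Φ := ⟨by rw [← NNReal.coe_lt_coe]; norm_num, hlip⟩
    obtain ⟨x, hx, -⟩ := hC.exists_fixedPoint (Φ 0) (edist_ne_top _ _)
    refine ⟨x, ?_⟩
    have hx' : x + s • (T x - x) = y - (t - s) • (T x - x) := by
      have h6 := hinv (y - (t - s) • (T x - x))
      rw [show inv (y - (t - s) • (T x - x)) = x from hx] at h6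
      exact h6
    show x + t • (T x - x) = y
    have e3 : x + t • (T x - x) = (x + s • (T x - x)) + (t - s) • (T x - x) := by module
    rw [e3, hx']; abel
  -- continuation from 0 to 1
  have hS0 : Function.Surjective (fun x : X => x + (0:ℝ) • (T x - x)) := by
    intro y; exact ⟨y, by simp⟩
  set ε : ℝ := c / (2 * (K + 1)) with hε
  have hε0 : 0 < ε := div_pos hc0 (by linarith)
  have hεK : ε * K ≤ c / 2 := by
    rw [hε, div_mul_eq_mul_div, div_le_div_iff₀ (by linarith) (by norm_num)]
    nlinarith
  have main : ∀ n : ℕ, Function.Surjective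
      (fun x : X => x + (min ((n : ℝ) * ε) 1) • (T x - x)) := by
    intro n
    induction n with
    | zero => simpa using hS0
    | succ n ih =>
      have h1 : (0:ℝ) ≤ min ((n : ℝ) * ε) 1 := le_min (by positivity) zero_le_one
      have h2 : min ((n : ℝ) * ε) 1 ≤ 1 := min_le_right _ _
      have h3 : (0:ℝ) ≤ min (((n : ℕ) + 1 : ℝ) * ε) 1 := le_min (by positivity) zero_le_one
      have h4 : min (((n : ℕ) + 1 : ℝ) * ε) 1 ≤ 1 := min_le_right _ _
      have h5 : |min (((n : ℕ) + 1 : ℝ) * ε) 1 - min ((n : ℝ) * ε) 1| ≤ ε := by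
        have := abs_min_sub_min_le_max (((n : ℕ) + 1 : ℝ) * ε) (1:ℝ) ((n : ℝ) * ε) (1:ℝ)
        have e : |(((n : ℕ) + 1 : ℝ) * ε) - (n : ℝ) * ε| = ε := by
          rw [show (((n : ℕ) + 1 : ℝ) * ε) - (n : ℝ) * ε = ε by ring, abs_of_pos hε0]
        rw [sub_self, abs_zero, e, max_eq_left hε0.le] at this
        exact this
      have h6 : |min (((n : ℕ) + 1 : ℝ) * ε) 1 - min ((n : ℝ) * ε) 1| * K ≤ c / 2 := by
        calc |min (((n : ℕ) + 1 : ℝ) * ε) 1 - min ((n : ℝ) * ε) 1| * K ≤ ε * K :=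
              mul_le_mul_of_nonneg_right h5 hK0
          _ ≤ c / 2 := hεK
      have := step (min ((n : ℝ) * ε) 1) (min (((n : ℕ) + 1 : ℝ) * ε) 1)
        h1 h2 h3 h4 h6 ih
      convert this using 4
      push_cast
      ring
  obtain ⟨N, hN⟩ := exists_nat_ge (1 / ε)
  have hN1 : (1:ℝ) ≤ (N : ℝ) * ε := by
    rw [div_le_iff₀ hε0] at hN
    linarith
  have hmin : min ((N : ℝ) * ε) 1 = 1 := min_eq_right hN1
  have hfin := main N
  rw [hmin] at hfin
  intro y
  obtain ⟨x, hx⟩ := hfin y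
  simp only [one_smul] at hx
  exact ⟨x, by rw [← hx]; abel⟩


theorem stmt18 {X Md : Type*} [NormedAddCommGroup X] [NormedSpace ℝ X] [CompleteSpace X]
    [NormedAddCommGroup Md] [NormedSpace ℝ Md] [CompleteSpace Md]
    -- `Md` is a BK-space with continuous coordinate functionals `coord n`.
    (coord : ℕ → Md →L[ℝ] ℝ)
    -- `({f n}, {τ n})` is a Lipschitz atomic decomposition for `X` w.r.t. `Md`
    -- with bounds `0 < a ≤ b` and analysis map `θ`.
    (f : ℕ → X → ℝ) (hflip : ∀ n, ∃ K : NNReal, LipschitzWith K (f n))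
    (θ : X → Md) (hmem : ∀ x n, coord n (θ x) = f n x)
    (a b : ℝ) (ha : 0 < a) (hab : a ≤ b)
    (hlow : ∀ x y : X, a * ‖x - y‖ ≤ ‖θ x - θ y‖)
    (hup : ∀ x y : X, ‖θ x - θ y‖ ≤ b * ‖x - y‖)
    (τ : ℕ → X)
    (hdecomp : ∀ x : X,
      Tendsto (fun N => ∑ n ∈ Finset.range N, f n x • τ n) atTop (nhds x))
    -- the new vectors `ω n`; the series `Σ f n x • ω n` converges for every `x`
    (ω : ℕ → X)
    (hconv : ∀ x : X, ∃ l : X,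
      Tendsto (fun N => ∑ n ∈ Finset.range N, f n x • ω n) atTop (nhds l))
    (l1 l2 μ : ℝ) (hl1 : 0 ≤ l1) (hl2 : 0 ≤ l2) (hμ : 0 ≤ μ)
    (hmax1 : l2 < 1) (hmax2 : l1 + μ * b < 1)
    -- the perturbation inequality, for all `c, d ∈ Md` for which the series converge:
    -- if `Σ (cₙ-dₙ)τₙ = s` and `Σ (cₙ-dₙ)ωₙ = t` then
    -- `‖Σ (cₙ-dₙ)(τₙ-ωₙ)‖ = ‖s - t‖ ≤ l1‖s‖ + l2‖t‖ + μ‖c-d‖`.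
    (hyp : ∀ c d : Md, ∀ s t : X,
      Tendsto (fun N => ∑ n ∈ Finset.range N, (coord n c - coord n d) • τ n) atTop (nhds s) →
      Tendsto (fun N => ∑ n ∈ Finset.range N, (coord n c - coord n d) • ω n) atTop (nhds t) →
      ‖s - t‖ ≤ l1 * ‖s‖ + l2 * ‖t‖ + μ * ‖c - d‖) :
    ∃ (g : ℕ → X → ℝ) (θ' : X → Md),
      (∀ n, ∃ K : NNReal, LipschitzWith K (g n)) ∧
      (∀ x n, coord n (θ' x) = g n x) ∧
      (∀ x y : X, a * (1 - l2) / (1 + l1 + μ * b) * ‖x - y‖ ≤ ‖θ' x - θ' y‖) ∧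
      (∀ x y : X, ‖θ' x - θ' y‖ ≤ b * (1 + l2) / (1 - (l1 + μ * b)) * ‖x - y‖) ∧
      (∀ x : X,
        Tendsto (fun N => ∑ n ∈ Finset.range N, g n x • ω n) atTop (nhds x)) := by
  
  classical
  set ρ : ℝ := l1 + μ * b with hρdef
  have hb : 0 < b := lt_of_lt_of_le ha hab
  have hρ0 : 0 ≤ ρ := by nlinarith
  have hρ1 : ρ < 1 := hmax2
  have hl2' : (0:ℝ) < 1 - l2 := by linarith
  have hρ1' : (0:ℝ) < 1 - ρ := by linarith
  choose T hT using hconv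
  -- the key perturbation inequality for `T`
  have key : ∀ x y : X, ‖(x - y) - (T x - T y)‖ ≤ ρ * ‖x - y‖ + l2 * ‖T x - T y‖ := by
    intro x y
    have h1 : Tendsto (fun N => ∑ n ∈ Finset.range N,
        (coord n (θ x) - coord n (θ y)) • τ n) atTop (nhds (x - y)) := by
      have h := (hdecomp x).sub (hdecomp y)
      have e : (fun N => ∑ n ∈ Finset.range N, (coord n (θ x) - coord n (θ y)) • τ n)
          = fun N => (∑ n ∈ Finset.range N, f n x • τ n) - ∑ n ∈ Finset.range N, f n y • τ n := by
        funext N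
        rw [← Finset.sum_sub_distrib]
        exact Finset.sum_congr rfl fun n _ => by rw [hmem, hmem, sub_smul]
      rw [e]; exact h
    have h2 : Tendsto (fun N => ∑ n ∈ Finset.range N,
        (coord n (θ x) - coord n (θ y)) • ω n) atTop (nhds (T x - T y)) := by
      have h := (hT x).sub (hT y)
      have e : (fun N => ∑ n ∈ Finset.range N, (coord n (θ x) - coord n (θ y)) • ω n)
          = fun N => (∑ n ∈ Finset.range N, f n x • ω n) - ∑ n ∈ Finset.range N, f n y • ω n := by
        funext N
        rw [← Finset.sum_sub_distrib]
        exact Finset.sum_congr rfl fun n _ => by rw [hmem, hmem, sub_smul]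
      rw [e]; exact h
    have h3 := hyp (θ x) (θ y) (x - y) (T x - T y) h1 h2
    have h4 := hup x y
    have h5 : μ * ‖θ x - θ y‖ ≤ μ * (b * ‖x - y‖) := mul_le_mul_of_nonneg_left h4 hμ
    rw [hρdef]
    nlinarith
  -- `T` is bi-Lipschitz
  have Tup : ∀ x y : X, (1 - l2) * ‖T x - T y‖ ≤ (1 + ρ) * ‖x - y‖ := by
    intro x y
    have h1 := key x y
    have h2 : ‖T x - T y‖ ≤ ‖x - y‖ + ‖(x - y) - (T x - T y)‖ := by
      have e : (x - y) - ((x - y) - (T x - T y)) = T x - T y := by abel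
      calc ‖T x - T y‖ = ‖(x - y) - ((x - y) - (T x - T y))‖ := by rw [e]
        _ ≤ ‖x - y‖ + ‖(x - y) - (T x - T y)‖ := norm_sub_le _ _
    nlinarith [norm_nonneg ((x - y) - (T x - T y))]
  have Tlow : ∀ x y : X, (1 - ρ) * ‖x - y‖ ≤ (1 + l2) * ‖T x - T y‖ := by
    intro x y
    have h1 := key x y
    have h2 : ‖x - y‖ ≤ ‖T x - T y‖ + ‖(x - y) - (T x - T y)‖ := by
      have e : (T x - T y) + ((x - y) - (T x - T y)) = x - y := by abel
      calc ‖x - y‖ = ‖(T x - T y) + ((x - y) - (T x - T y))‖ := by rw [e]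
        _ ≤ ‖T x - T y‖ + ‖(x - y) - (T x - T y)‖ := norm_add_le _ _
    nlinarith [norm_nonneg ((x - y) - (T x - T y))]
  -- `T` is surjective and injective, hence bijective
  have hsurj : Function.Surjective T := aux_surj T ρ l2 hρ0 hρ1 hl2 hmax1 key
  choose V hV using hsurj
  -- `V` is a right inverse of `T`; it is Lipschitz
  have hVlip : ∀ x y : X, (1 - ρ) * ‖V x - V y‖ ≤ (1 + l2) * ‖x - y‖ := by
    intro x y
    have h := Tlow (V x) (V y)
    rwa [hV x, hV y] at h
  have hVlip' : ∀ x y : X, ‖V x - V y‖ ≤ ((1 + l2) / (1 - ρ)) * ‖x - y‖ := by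
    intro x y
    rw [div_mul_eq_mul_div, le_div_iff₀ hρ1']
    have h := hVlip x y
    nlinarith
  refine ⟨fun n x => f n (V x), fun x => θ (V x), ?_, ?_, ?_, ?_, ?_⟩
  · -- Lipschitz
    intro n
    obtain ⟨Kf, hKf⟩ := hflip n
    refine ⟨Kf * Real.toNNReal ((1 + l2) / (1 - ρ)), ?_⟩
    apply LipschitzWith.of_dist_le_mul
    intro x y
    have h1 := hKf.dist_le_mul (V x) (V y)
    have h2 : dist (V x) (V y) ≤ ((1 + l2) / (1 - ρ)) * dist x y := by
      rw [dist_eq_norm, dist_eq_norm]; exact hVlip' x y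
    have hC0 : (0:ℝ) ≤ (1 + l2) / (1 - ρ) := by positivity
    have e : ((Kf * Real.toNNReal ((1 + l2) / (1 - ρ)) : NNReal) : ℝ)
        = (Kf : ℝ) * ((1 + l2) / (1 - ρ)) := by
      push_cast
      rw [Real.coe_toNNReal _ hC0]
    rw [e]
    calc dist (f n (V x)) (f n (V y)) ≤ (Kf : ℝ) * dist (V x) (V y) := h1
      _ ≤ (Kf : ℝ) * (((1 + l2) / (1 - ρ)) * dist x y) :=
          mul_le_mul_of_nonneg_left h2 Kf.coe_nonneg
      _ = (Kf : ℝ) * ((1 + l2) / (1 - ρ)) * dist x y := by ring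
  · -- coordinates
    intro x n
    exact hmem (V x) n
  · -- lower frame bound
    intro x y
    have h1 := hlow (V x) (V y)
    have h2 := Tup (V x) (V y)
    rw [hV x, hV y] at h2
    -- a * (1 - l2)/(1 + ρ) * ‖x - y‖ ≤ a * ‖V x - V y‖ ≤ ‖θ (V x) - θ (V y)‖
    have h3 : a * (1 - l2) / (1 + l1 + μ * b) * ‖x - y‖ ≤ a * ‖V x - V y‖ := by
      rw [div_mul_eq_mul_div, div_le_iff₀ (by nlinarith : (0:ℝ) < 1 + l1 + μ * b)]
      have e : 1 + l1 + μ * b = 1 + ρ := by rw [hρdef]; ring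
      rw [e]
      nlinarith [norm_nonneg (V x - V y)]
    linarith
  · -- upper frame bound
    intro x y
    have h1 := hup (V x) (V y)
    have h2 := hVlip x y
    rw [div_mul_eq_mul_div, le_div_iff₀ (by rw [hρdef] at hρ1' ⊢; linarith)]
    have e : 1 - (l1 + μ * b) = 1 - ρ := by rw [hρdef]
    rw [e]
    nlinarith [norm_nonneg (x - y), norm_nonneg (V x - V y)]
  · -- reconstruction
    intro x
    have h := hT (V x)
    rwa [hV x] at h
end

section
/- Let (E, ‖·‖) be a sequence space such that the unit vectors e_n are nonzero and, defining for finitely supported scalar sequences {a_n} the norm ‖Σ a_n e_n‖ := max_n ‖Σ_{k=1}^n a_k τ_k‖ where {τ_n} is a sequence of nonzero vectors in a Banach space X, the sequence {e_n} forms a Schauder basis of the completion Z of the finitely supported sequences. Moreover, if ({f_n}, {τ_n}) is a Lipschitz atomic decomposition for X with all τ_n ≠ 0, then the map θ : X → Z, θx = Σ f_n(x) e_n, is well-defined and injective, the map Γ : Z → X, Γ(Σ a_n e_n) = Σ a_n τ_n, is bounded linear, Γθ = id_X, and P := θΓ satisfies P² = P, P(Z) = θ(X), and P e_n = θ τ_n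 for all n. -/
open Filter


section aux
variable {W : Type*} [AddCommGroup W] [Module ℝ W]

lemma aux_sum_tail (c : ℕ → ℝ) (w : ℕ → W) {N M : ℕ} (h : N ≤ M) :
    ∑ k ∈ Finset.range M, (if k < N then 0 else c k) • w k
      = ∑ k ∈ Finset.range M, c k • w k - ∑ k ∈ Finset.range N, c k • w k := by
  rw [eq_sub_iff_add_eq]
  have h2 : ∑ k ∈ Finset.range N, c k • w k
      = ∑ k ∈ Finset.range M, (if k < N then c k else 0) • w k := by
    rw [← Finset.sum_subset (Finset.range_subset_range.2 h) (fun k _ hk => by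
      rw [if_neg (by simpa using hk), zero_smul])]
    exact Finset.sum_congr rfl fun k hk => by rw [if_pos (Finset.mem_range.1 hk)]
  rw [h2, ← Finset.sum_add_distrib]
  apply Finset.sum_congr rfl; intro k _
  by_cases hk : k < N <;> simp [hk]

end aux

section aux2
variable {X Z : Type*} [NormedAddCommGroup X] [NormedSpace ℝ X]
  [NormedAddCommGroup Z] [NormedSpace ℝ Z]
  (τ : ℕ → X) (e : ℕ → Z)
  (hnorm : ∀ (c : ℕ → ℝ) (m : ℕ), 0 < m →
      ‖∑ k ∈ Finset.range m, c k • e k‖ =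
        sSup {r : ℝ | ∃ n < m, r = ‖∑ k ∈ Finset.range (n + 1), c k • τ k‖})

include hnorm

omit hnorm in
lemma aux_setA (c : ℕ → ℝ) (m : ℕ) :
    {r : ℝ | ∃ n < m, r = ‖∑ k ∈ Finset.range (n + 1), c k • τ k‖}
      = (fun n => ‖∑ k ∈ Finset.range (n + 1), c k • τ k‖) '' Set.Iio m := by
  ext r
  constructor
  · rintro ⟨n, hn, rfl⟩; exact ⟨n, hn, rfl⟩
  · rintro ⟨n, hn, rfl⟩; exact ⟨n, hn, rfl⟩

lemma aux_elem_le (c : ℕ → ℝ) {m n : ℕ} (hn : n < m) :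
    ‖∑ k ∈ Finset.range (n + 1), c k • τ k‖ ≤ ‖∑ k ∈ Finset.range m, c k • e k‖ := by
  rw [hnorm c m (Nat.pos_of_ne_zero (by omega))]
  refine le_csSup ?_ ⟨n, hn, rfl⟩
  rw [aux_setA τ c m]
  exact ((Set.finite_Iio m).image _).bddAbove

lemma aux_elem_le' (c : ℕ → ℝ) {m j : ℕ} (hj : j ≤ m) (hm : 0 < m) :
    ‖∑ k ∈ Finset.range j, c k • τ k‖ ≤ ‖∑ k ∈ Finset.range m, c k • e k‖ := by
  rcases Nat.eq_zero_or_pos j with rfl | hjpos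
  · simp
  · obtain ⟨n, rfl⟩ := Nat.exists_eq_add_of_lt hjpos
    simpa using aux_elem_le τ e hnorm c (show 0 + n < m by omega)

lemma aux_sup_le (c : ℕ → ℝ) {m : ℕ} (hm : 0 < m) {K : ℝ}
    (h : ∀ n < m, ‖∑ k ∈ Finset.range (n + 1), c k • τ k‖ ≤ K) :
    ‖∑ k ∈ Finset.range m, c k • e k‖ ≤ K := by
  rw [hnorm c m hm]
  refine csSup_le ⟨_, ⟨0, hm, rfl⟩⟩ ?_
  rintro r ⟨n, hn, rfl⟩
  exact h n hn

lemma aux_mono (c : ℕ → ℝ) {n m : ℕ} (h : n ≤ m) :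
    ‖∑ k ∈ Finset.range n, c k • e k‖ ≤ ‖∑ k ∈ Finset.range m, c k • e k‖ := by
  rcases Nat.eq_zero_or_pos n with rfl | hn
  · simp
  · exact aux_sup_le τ e hnorm c hn
      (fun j hj => aux_elem_le τ e hnorm c (lt_of_lt_of_le hj h))

lemma aux_coord (c : ℕ → ℝ) {n m : ℕ} (hn : n < m) :
    ‖c n • τ n‖ ≤ 2 * ‖∑ k ∈ Finset.range m, c k • e k‖ := by
  have h1 : c n • τ n = ∑ k ∈ Finset.range (n + 1), c k • τ k
      - ∑ k ∈ Finset.range n, c k • τ k := by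
    rw [Finset.sum_range_succ]; abel
  rw [h1]
  refine (norm_sub_le _ _).trans ?_
  have h2 := aux_elem_le τ e hnorm c hn
  have h3 := aux_elem_le' τ e hnorm c (show n ≤ m by omega) (by omega)
  linarith

end aux2

section aux3
variable {X Z : Type*} [NormedAddCommGroup X] [NormedSpace ℝ X]
  [NormedAddCommGroup Z] [NormedSpace ℝ Z]
  (τ : ℕ → X) (e : ℕ → Z)
  (hnorm : ∀ (c : ℕ → ℝ) (m : ℕ), 0 < m →
      ‖∑ k ∈ Finset.range m, c k • e k‖ =
        sSup {r : ℝ | ∃ n < m, r = ‖∑ k ∈ Finset.range (n + 1), c k • τ k‖})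

include hnorm

lemma aux_linindep (hτ : ∀ n, τ n ≠ 0) : LinearIndependent ℝ e := by
  rw [linearIndependent_iff'']
  intro s g hg0 hsum i
  by_cases hi : i ∈ s
  · set m := s.sup id + 1 with hm
    have hsub : s ⊆ Finset.range m :=
      fun j hj => Finset.mem_range.2 (Nat.lt_succ_of_le (Finset.le_sup (f := id) hj))
    have hsum' : ∑ k ∈ Finset.range m, g k • e k = 0 := by
      rw [← Finset.sum_subset hsub (fun k _ hk => by rw [hg0 k hk, zero_smul])]
      exact hsum
    have hco := aux_coord τ e hnorm g
      (show i < m from Nat.lt_succ_of_le (Finset.le_sup (f := id) hi))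
    rw [hsum', norm_zero, mul_zero, norm_le_zero_iff, smul_eq_zero] at hco
    rcases hco with h | h
    · exact h
    · exact absurd h (hτ i)
  · exact hg0 i hi

end aux3


theorem stmt19 {X Z : Type*} [NormedAddCommGroup X] [NormedSpace ℝ X] [CompleteSpace X]
    [NormedAddCommGroup Z] [NormedSpace ℝ Z] [CompleteSpace Z]
    -- `({f n}, {τ n})` is a Lipschitz atomic decomposition for `X` with all `τ n ≠ 0`
    (f : ℕ → X → ℝ) (hflip : ∀ n, ∃ K : NNReal, LipschitzWith K (f n))
    (τ : ℕ → X) (hτ : ∀ n, τ n ≠ 0)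
    (hdecomp : ∀ x : X,
      Tendsto (fun N => ∑ n ∈ Finset.range N, f n x • τ n) atTop (nhds x))
    -- `Z` is the Banach space obtained as the completion of the finitely supported
    -- scalar sequences (spanned by the unit vectors `e n`) under the norm
    -- `‖Σ aₙ eₙ‖ = maxₙ ‖Σ_{k≤n} aₖ τₖ‖`.
    (e : ℕ → Z)
    (hdense : Dense (Submodule.span ℝ (Set.range e) : Set Z))
    (hnorm : ∀ (c : ℕ → ℝ) (m : ℕ), 0 < m →
      ‖∑ k ∈ Finset.range m, c k • e k‖ =
        sSup {r : ℝ | ∃ n < m, r = ‖∑ k ∈ Finset.range (n + 1), c k • τ k‖}) :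
    -- then `{e n}` is a Schauder basis of `Z`
    (∀ z : Z, ∃! a : ℕ → ℝ,
      Tendsto (fun N => ∑ k ∈ Finset.range N, a k • e k) atTop (nhds z)) ∧
    -- and there are maps `θ`, `Γ`, `P` dilating the decomposition to the basis `{e n}`
    ∃ (θ : X → Z) (Γ : Z →L[ℝ] X) (P : Z → Z),
      Function.Injective θ ∧
      (∀ x : X,
        Tendsto (fun N => ∑ n ∈ Finset.range N, f n x • e n) atTop (nhds (θ x))) ∧
      (∀ n, Γ (e n) = τ n) ∧
      (∀ x : X, Γ (θ x) = x) ∧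
      P = θ ∘ Γ ∧
      (∀ z : Z, P (P z) = P z) ∧
      Set.range P = Set.range θ ∧
      (∀ n, P (e n) = θ (τ n)) := by
  classical
  have li : LinearIndependent ℝ e := aux_linindep τ e hnorm hτ
  set V := Submodule.span ℝ (Set.range e) with hV
  let B : Module.Basis ℕ ℝ V := Module.Basis.span li
  have hB : ∀ n, ((B n : V) : Z) = e n := fun n => congrArg Subtype.val (Module.Basis.span_apply li n)
  -- representation of elements of V as finite sums
  have hrep : ∀ (v : V) (m : ℕ), (B.repr v).support ⊆ Finset.range m →
      (v : Z) = ∑ k ∈ Finset.range m, (B.repr v k) • e k := by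
    intro v m hm
    have h1 : (v : Z) = ∑ i ∈ (B.repr v).support, B.repr v i • e i := by
      conv_lhs => rw [← B.linearCombination_repr v]
      rw [Finsupp.linearCombination_apply, Finsupp.sum]
      push_cast
      exact Finset.sum_congr rfl fun i _ => by rw [hB]
    rw [h1]
    exact Finset.sum_subset hm fun k _ hk => by
      rw [Finsupp.notMem_support_iff.1 hk, zero_smul]
  have hsupprange : ∀ (v : V) (N : ℕ), (B.repr v).support.sup id + 1 ≤ N →
      (B.repr v).support ⊆ Finset.range N := by
    intro v N hN j hj
    exact Finset.mem_range.2 (by have := Finset.le_sup (f := id) hj; simp at this; omega)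
  -- coordinate bound
  have hτpos : ∀ n, (0:ℝ) < ‖τ n‖ := fun n => norm_pos_iff.2 (hτ n)
  have hcoordbd : ∀ (n : ℕ) (v : V), ‖B.repr v n‖ ≤ 2 / ‖τ n‖ * ‖v‖ := by
    intro n v
    set m := max ((B.repr v).support.sup id + 1) (n + 1) with hm
    have hsupp : (B.repr v).support ⊆ Finset.range m :=
      hsupprange v m (le_max_left _ _)
    have hv := hrep v m hsupp
    have hco := aux_coord τ e hnorm (fun k => B.repr v k) (show n < m by omega)
    rw [← hv] at hco
    rw [norm_smul] at hco
    have : ‖(v : Z)‖ = ‖v‖ := rfl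
    rw [this] at hco
    rw [div_mul_eq_mul_div, le_div_iff₀ (hτpos n)]
    calc ‖B.repr v n‖ * ‖τ n‖ = ‖B.repr v n‖ * ‖τ n‖ := rfl
      _ ≤ 2 * ‖v‖ := hco
  -- coordinate functionals on V
  let φ : ℕ → (V →L[ℝ] ℝ) := fun n =>
    LinearMap.mkContinuous (B.coord n) (2 / ‖τ n‖) (fun v => hcoordbd n v)
  have hdr : DenseRange (V.subtypeL : V →L[ℝ] Z) := hdense.denseRange_val
  have hui : IsUniformInducing (V.subtypeL : V →L[ℝ] Z) :=
    isometry_subtype_coe.isUniformInducing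
  let φbar : ℕ → (Z →L[ℝ] ℝ) := fun n => (φ n).extend V.subtypeL
  have hφbar : ∀ (n : ℕ) (v : V), φbar n (v : Z) = B.repr v n := fun n v =>
    ContinuousLinearMap.extend_eq (φ n) hdr hui v
  -- the map Γ
  have hLbd : ∀ v : V, ‖(Finsupp.linearCombination ℝ τ).comp (B.repr : V →ₗ[ℝ] (ℕ →₀ ℝ)) v‖
      ≤ 1 * ‖v‖ := by
    intro v
    set m := (B.repr v).support.sup id + 1 with hm
    have hsupp : (B.repr v).support ⊆ Finset.range m := hsupprange v m le_rfl
    have h1 : (Finsupp.linearCombination ℝ τ).comp (B.repr : V →ₗ[ℝ] (ℕ →₀ ℝ)) v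
        = ∑ k ∈ Finset.range m, (B.repr v k) • τ k := by
      rw [LinearMap.comp_apply]
      rw [Finsupp.linearCombination_apply, Finsupp.sum]
      exact Finset.sum_subset hsupp fun k _ hk => by
        rw [Finsupp.notMem_support_iff.1 hk, zero_smul]
    rw [h1, one_mul]
    have := aux_elem_le' τ e hnorm (fun k => B.repr v k) (le_refl m) (by omega)
    rw [← hrep v m hsupp] at this
    exact this
  let Γ : Z →L[ℝ] X :=
    (LinearMap.mkContinuous ((Finsupp.linearCombination ℝ τ).comp
      (B.repr : V →ₗ[ℝ] (ℕ →₀ ℝ))) 1 hLbd).extend V.subtypeL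
  have hΓe : ∀ n, Γ (e n) = τ n := by
    intro n
    have hmem : e n ∈ V := Submodule.subset_span ⟨n, rfl⟩
    have h1 : (⟨e n, hmem⟩ : V) = B n := Subtype.ext (hB n).symm
    have h2 := ContinuousLinearMap.extend_eq
      (LinearMap.mkContinuous ((Finsupp.linearCombination ℝ τ).comp
        (B.repr : V →ₗ[ℝ] (ℕ →₀ ℝ))) 1 hLbd) hdr hui (⟨e n, hmem⟩ : V)
    have h3 : (V.subtypeL : V →L[ℝ] Z) (⟨e n, hmem⟩ : V) = e n := rfl
    rw [h3] at h2
    rw [h2, h1]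
    simp only [LinearMap.mkContinuous_apply, LinearMap.comp_apply, LinearEquiv.coe_coe]
    rw [Module.Basis.repr_self, Finsupp.linearCombination_single, one_smul]
  -- θ : Cauchy partial sums
  have key : ∀ x : X, ∃ z : Z,
      Tendsto (fun N => ∑ n ∈ Finset.range N, f n x • e n) atTop (nhds z) := by
    intro x
    apply cauchySeq_tendsto_of_complete
    have hc : CauchySeq (fun N => ∑ n ∈ Finset.range N, f n x • τ n) :=
      (hdecomp x).cauchySeq
    rw [Metric.cauchySeq_iff] at hc ⊢
    intro ε hε
    obtain ⟨N0, hN0⟩ := hc (ε / 2) (by linarith)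
    have main : ∀ N M : ℕ, N0 + 1 ≤ N → N ≤ M →
        ‖(∑ n ∈ Finset.range M, f n x • e n) - ∑ n ∈ Finset.range N, f n x • e n‖
          ≤ ε / 2 := by
      intro N M hN hNM
      rw [← aux_sum_tail (fun n => f n x) e hNM]
      refine aux_sup_le τ e hnorm _ (by omega) ?_
      intro n hn
      by_cases hcase : n + 1 ≤ N
      · have : ∀ k ∈ Finset.range (n + 1),
            (if k < N then (0:ℝ) else f k x) • τ k = 0 := by
          intro k hk
          rw [if_pos (by simp at hk; omega), zero_smul]
        rw [Finset.sum_eq_zero this, norm_zero]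
        linarith
      · rw [aux_sum_tail (fun n => f n x) τ (by omega : N ≤ n + 1)]
        have := hN0 (n + 1) (by omega) N (by omega)
        rw [dist_eq_norm] at this
        linarith
    refine ⟨N0 + 1, fun M hM N hN => ?_⟩
    rcases le_total N M with h | h
    · rw [dist_eq_norm]
      calc ‖(∑ n ∈ Finset.range M, f n x • e n) - ∑ n ∈ Finset.range N, f n x • e n‖
          ≤ ε / 2 := main N M hN h
        _ < ε := by linarith
    · rw [dist_eq_norm, norm_sub_rev]
      calc ‖(∑ n ∈ Finset.range N, f n x • e n) - ∑ n ∈ Finset.range M, f n x • e n‖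
          ≤ ε / 2 := main M N hM h
        _ < ε := by linarith
  let θ : X → Z := fun x => (key x).choose
  have hθ : ∀ x, Tendsto (fun N => ∑ n ∈ Finset.range N, f n x • e n) atTop
      (nhds (θ x)) := fun x => (key x).choose_spec
  have hΓθ : ∀ x, Γ (θ x) = x := by
    intro x
    have h1 : Tendsto (fun N => Γ (∑ n ∈ Finset.range N, f n x • e n)) atTop
        (nhds (Γ (θ x))) := (Γ.continuous.tendsto _).comp (hθ x)
    have h2 : (fun N => Γ (∑ n ∈ Finset.range N, f n x • e n))
        = fun N => ∑ n ∈ Finset.range N, f n x • τ n := by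
      funext N
      rw [map_sum]
      exact Finset.sum_congr rfl fun k _ => by rw [map_smul, hΓe k]
    rw [h2] at h1
    exact tendsto_nhds_unique h1 (hdecomp x)
  -- partial sum operators
  let R : ℕ → (Z →L[ℝ] Z) := fun N =>
    ∑ k ∈ Finset.range N, (φbar k).smulRight (e k)
  have hRapp : ∀ (N : ℕ) (z : Z), R N z = ∑ k ∈ Finset.range N, φbar k z • e k := by
    intro N z
    simp [R, ContinuousLinearMap.sum_apply, ContinuousLinearMap.smulRight_apply]
  have hRv : ∀ (N : ℕ) (v : V), R N (v : Z) = ∑ k ∈ Finset.range N, B.repr v k • e k := by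
    intro N v
    rw [hRapp]
    exact Finset.sum_congr rfl fun k _ => by rw [hφbar]
  have hRfix : ∀ (v : V) (N : ℕ), (B.repr v).support ⊆ Finset.range N →
      R N (v : Z) = (v : Z) := by
    intro v N hsupp
    rw [hRv, ← hrep v N hsupp]
  have hRVbd : ∀ (N : ℕ) (v : V), ‖R N (v : Z)‖ ≤ ‖(v : Z)‖ := by
    intro N v
    set m := max N ((B.repr v).support.sup id + 1) with hm
    have hsupp : (B.repr v).support ⊆ Finset.range m := hsupprange v m (le_max_right _ _)
    rw [hRv, hrep v m hsupp]
    exact aux_mono τ e hnorm (fun k => B.repr v k) (le_max_left _ _)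
  have hRbd : ∀ (N : ℕ) (z : Z), ‖R N z‖ ≤ ‖z‖ := by
    intro N z
    have hcl : IsClosed {z : Z | ‖R N z‖ ≤ ‖z‖} :=
      isClosed_le ((R N).continuous.norm) continuous_norm
    have hsub : (V : Set Z) ⊆ {z : Z | ‖R N z‖ ≤ ‖z‖} := fun w hw => hRVbd N ⟨w, hw⟩
    exact hcl.closure_subset_iff.2 hsub (hdense z)
  have hRz : ∀ z : Z, Tendsto (fun N => R N z) atTop (nhds z) := by
    intro z
    rw [Metric.tendsto_atTop]
    intro ε hε
    obtain ⟨w, hw1, hw2⟩ : ∃ w ∈ (V : Set Z), dist z w < ε / 3 := by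
      have hz := hdense z
      rw [Metric.mem_closure_iff] at hz
      exact hz (ε / 3) (by linarith)
    set v : V := ⟨w, hw1⟩ with hv
    refine ⟨(B.repr v).support.sup id + 1, fun N hN => ?_⟩
    have hsupp : (B.repr v).support ⊆ Finset.range N := hsupprange v N hN
    have h1 : R N z - z = R N (z - w) + (w - z) := by
      have := hRfix v N hsupp
      rw [map_sub]
      rw [show ((v : Z)) = w from rfl] at this
      rw [this]
      abel
    rw [dist_eq_norm, h1]
    calc ‖R N (z - w) + (w - z)‖ ≤ ‖R N (z - w)‖ + ‖w - z‖ := norm_add_le _ _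
      _ ≤ ‖z - w‖ + ‖w - z‖ := by
          have := hRbd N (z - w); linarith
      _ < ε := by
          rw [dist_eq_norm] at hw2
          rw [norm_sub_rev w z]
          linarith
  -- Schauder basis: existence and uniqueness
  have hexuniq : ∀ z : Z, ∃! a : ℕ → ℝ,
      Tendsto (fun N => ∑ k ∈ Finset.range N, a k • e k) atTop (nhds z) := by
    intro z
    have hb : Tendsto (fun N => ∑ k ∈ Finset.range N, (fun n => φbar n z) k • e k)
        atTop (nhds z) :=
      Tendsto.congr (fun N => hRapp N z) (hRz z)
    refine ⟨fun n => φbar n z, hb, ?_⟩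
    · intro a ha
      funext n
      have hd : Tendsto (fun N => ∑ k ∈ Finset.range N, (a k - φbar k z) • e k)
          atTop (nhds 0) := by
        have := ha.sub hb
        simp only [sub_self] at this
        have heq : (fun N => (∑ k ∈ Finset.range N, a k • e k)
            - ∑ k ∈ Finset.range N, (fun n => φbar n z) k • e k)
            = fun N => ∑ k ∈ Finset.range N, (a k - φbar k z) • e k := by
          funext N
          rw [← Finset.sum_sub_distrib]
          exact Finset.sum_congr rfl fun k _ => by rw [sub_smul]
        rw [heq] at this
        exact this
      have h2 : Tendsto (fun m => 2 * ‖∑ k ∈ Finset.range m, (a k - φbar k z) • e k‖)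
          atTop (nhds 0) := by
        have := (hd.norm).const_mul 2
        simpa using this
      have hle : ‖(a n - φbar n z) • τ n‖ ≤ 0 := by
        refine ge_of_tendsto h2 ?_
        filter_upwards [eventually_ge_atTop (n + 1)] with m hm
        exact aux_coord τ e hnorm (fun k => a k - φbar k z) (show n < m by omega)
      have h0 : (a n - φbar n z) • τ n = 0 := norm_le_zero_iff.1 hle
      rcases smul_eq_zero.1 h0 with h | h
      · have := sub_eq_zero.1 h; linarith [this]
      · exact absurd h (hτ n)
  refine ⟨hexuniq, θ, Γ, θ ∘ Γ, ?_, hθ, hΓe, hΓθ, rfl, ?_, ?_, ?_⟩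
  · exact Function.LeftInverse.injective hΓθ
  · intro z
    simp only [Function.comp_apply, hΓθ]
  · ext z
    constructor
    · rintro ⟨w, rfl⟩; exact ⟨Γ w, rfl⟩
    · rintro ⟨x, rfl⟩
      exact ⟨θ x, by simp only [Function.comp_apply, hΓθ]⟩
  · intro n
    simp only [Function.comp_apply, hΓe]
end
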